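/- For the family of instances with n agents, shares s_i = n/(n+1)^{n−i+1}, n² chores where each of the chores (k−1)n+1,...,kn has common value −1/(n+1)^{n−k+1} to all agents: the partition giving agent i the chores {(i−1)n+1,...,in} satisfies V(X_i)/s_i = −1 for every i, hence WMMS_i = −s_i = −n/(n+1)^{n−i+1} for each agent i (taking the normalization where totals are as given). -/

import Mathlib

open Finset

/-- Total value of bundle `k` in the partition `X` of the chores, under valuation `V`. -/
noncomputable def bundleVal {n m : ℕ} (V : Fin m → ℝ) (X : Fin m → Fin n) (k : Fin n) : ℝ :=
  ∑ j ∈ Finset.univ.filter (fun j => X j = k), V j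

/-- The weighted maxmin share of agent `i` with valuation `V` and shares `s`:
`s i` times the maximum over all `n`-partitions of the minimum weighted bundle ratio. -/
noncomputable def WMMS {n m : ℕ} (hn : 0 < n) (s : Fin n → ℝ) (V : Fin m → ℝ) (i : Fin n) : ℝ :=
  haveI : NeZero n := ⟨hn.ne'⟩
  s i * (Finset.univ : Finset (Fin m → Fin n)).sup' Finset.univ_nonempty
    (fun X => (Finset.univ : Finset (Fin n)).inf' Finset.univ_nonempty
      (fun k => bundleVal V X k / s k))

/-! Summing `min_k V(X_k)/s_k ≤ V(X_k)/s_k` against the weights `s_k` shows that no partition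
has minimum ratio above `V(M) / Σ s_k`. The tiered partition gives agent `i` the `n` chores of
value `-1/(n+1)^(n-i)`, so every ratio is `-1`; the bound is then `-1` as well and is attained. -/

section Bundles

variable {m n : ℕ}

theorem sum_bundleVal (V : Fin m → ℝ) (X : Fin m → Fin n) :
    ∑ k, bundleVal V X k = ∑ j, V j :=
  sum_fiberwise univ X V

theorem bundleVal_eq_card_mul {V : Fin m → ℝ} {X : Fin m → Fin n} {w : Fin n → ℝ}
    (hV : ∀ j, V j = w (X j)) (k : Fin n) : bundleVal V X k = #{j | X j = k} * w k := by
  unfold bundleVal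
  rw [sum_congr rfl fun j hj => by rw [hV, (mem_filter.mp hj).2], sum_const,
    nsmul_eq_mul]

theorem inf'_bundleVal_div_le [NeZero n] {s : Fin n → ℝ} (hs : ∀ k, 0 < s k)
    (V : Fin m → ℝ) (X : Fin m → Fin n) :
    univ.inf' univ_nonempty (fun k => bundleVal V X k / s k) ≤ (∑ j, V j) / ∑ k, s k := by
  set c := univ.inf' univ_nonempty (fun k => bundleVal V X k / s k)
  have hc : ∀ k, c * s k ≤ bundleVal V X k := fun k =>
    (le_div_iff₀ (hs k)).mp (inf'_le _ (mem_univ k))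
  rw [le_div_iff₀ (sum_pos (fun k _ => hs k) univ_nonempty), ← sum_bundleVal V X,
    mul_sum]
  exact sum_le_sum fun k _ => hc k

theorem WMMS_eq_of_forall_bundleVal_div_eq (hn : 0 < n) {s : Fin n → ℝ} (hs : ∀ k, 0 < s k)
    {V : Fin m → ℝ} {X : Fin m → Fin n} {c : ℝ} (hX : ∀ k, bundleVal V X k / s k = c)
    (i : Fin n) : WMMS hn s V i = s i * c := by
  have : NeZero n := ⟨hn.ne'⟩
  have htotal : (∑ j, V j) / ∑ k, s k = c := by
    have hbundle : ∀ k, bundleVal V X k = c * s k := fun k => by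
      rw [← hX k, div_mul_cancel₀ _ (hs k).ne']
    rw [← sum_bundleVal V X, sum_congr rfl fun k _ => hbundle k, ← mul_sum,
      mul_div_cancel_right₀ _ (sum_pos (fun k _ => hs k) univ_nonempty).ne']
  unfold WMMS
  congr 1
  refine le_antisymm (sup'_le _ _ fun Y _ => htotal ▸ inf'_bundleVal_div_le hs V Y) ?_
  calc c = univ.inf' univ_nonempty (fun k => bundleVal V X k / s k) := by
        simp only [hX, inf'_const]
    _ ≤ _ := le_sup' (fun Y : Fin m → Fin n =>
        univ.inf' univ_nonempty (fun k => bundleVal V Y k / s k)) (mem_univ X)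

theorem card_filter_divNat_eq (i : Fin m) :
    #{j : Fin (m * n) | j.divNat = i} = n := by
  have hfst (p : Fin m × Fin n) : (finProdFinEquiv p).divNat = p.1 :=
    congrArg Prod.fst (finProdFinEquiv.symm_apply_apply p)
  have hfiber : ({j : Fin (m * n) | j.divNat = i} : Finset _).map
      finProdFinEquiv.symm.toEmbedding = {i} ×ˢ univ := by
    ext ⟨a, b⟩
    simp [hfst, eq_comm]
  rw [← card_map finProdFinEquiv.symm.toEmbedding, hfiber, card_product, card_singleton,
    card_univ, Fintype.card_fin, one_mul]

end Bundles

/-- The family of instances with shares `s i = n/(n+1)^(n-i)` and `n²` chores in `n` tiers,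
tier `t` chores each worth `-1/(n+1)^(n-t)`: the tiered partition (agent `i` receives tier `i`)
has every weighted ratio equal to `-1`, and `WMMS_i = -s i` for every agent. -/
theorem stmt_17 (n : ℕ) (hn : 0 < n) :
    let s : Fin n → ℝ := fun i => (n : ℝ) / ((n:ℝ)+1)^(n - i.val)
    let V : Fin (n*n) → ℝ := fun j => -(1 / ((n:ℝ)+1)^(n - j.val / n))
    let X : Fin (n*n) → Fin n :=
      fun j => ⟨j.val / n, (Nat.div_lt_iff_lt_mul hn).mpr j.isLt⟩
    (∀ i, bundleVal V X i / s i = -1) ∧ (∀ i, WMMS hn s V i = -s i) := by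
  intro s V X
  have hs : ∀ i, 0 < s i := fun i => div_pos (by exact_mod_cast hn) (by positivity)
  have hratio : ∀ i, bundleVal V X i / s i = -1 := fun i => by
    rw [bundleVal_eq_card_mul (V := V) (X := X) (w := fun i => -(1 / ((n : ℝ) + 1) ^ (n - i.val)))
      (fun _ => rfl) i, show X = Fin.divNat from rfl, card_filter_divNat_eq]
    simp only [s]
    field_simp
  exact ⟨hratio, fun i => by rw [WMMS_eq_of_forall_bundleVal_div_eq hn hs hratio, mul_neg_one]⟩
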